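/- arXiv:0711.1718 — 4 statements merged into one kernel-verified Lean document; each statement's English description precedes it below -/
import Mathlib

section
/- Let f : [−a,a] → ℝ be continuously differentiable and let ψ : [−a,a] → ℝ be continuous with antiderivative εψ(λ) = ∫_{−a}^{a} ε(λ−μ)ψ(μ)dμ (so (εψ)' = ψ). Then ε(fψ)(λ) = f(λ)·εψ(λ) − (1/2) f(a)·εψ(a) − (1/2) f(−a)·εψ(−a) − ε(f'·εψ)(λ) for all λ ∈ (−a,a). -/
open MeasureTheory

/-- The operator `ε` on `[-a,a]`. -/
noncomputable def epsOp (a : ℝ) (f : ℝ → ℝ) (l : ℝ) : ℝ :=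
  ∫ μ in Set.Icc (-a) a, (Real.sign (l - μ) / 2) * f μ

/-- Almost every real is different from a given point. -/
lemma ae_ne_point (l : ℝ) : ∀ᵐ μ : ℝ, μ ≠ l := by
  refine ae_iff.mpr ?_
  simpa only [ne_eq, not_not, Set.setOf_eq_eq_singleton] using Real.volume_singleton (a := l)

/-- `epsOp` expressed via interval integrals. -/
lemma epsOp_eq_interval (a : ℝ) (g : ℝ → ℝ)
    (hg : IntegrableOn g (Set.Icc (-a) a)) {l : ℝ} (hl : l ∈ Set.Icc (-a) a) :
    epsOp a g l = (∫ x in (-a)..l, g x) - (1 / 2) * ∫ x in (-a)..a, g x := by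
  obtain ⟨hl1, hl2⟩ := hl
  have hdecomp : Set.Icc (-a) l ∪ Set.Ioc l a = Set.Icc (-a) a :=
    Set.Icc_union_Ioc_eq_Icc hl1 hl2
  have hdisj : Disjoint (Set.Icc (-a) l) (Set.Ioc l a) := by
    apply Set.disjoint_left.mpr
    rintro x ⟨_, hx2⟩ ⟨hx3, _⟩; exact absurd hx2 (not_le.mpr hx3)
  have hg1 : IntegrableOn g (Set.Icc (-a) l) :=
    hg.mono_set (Set.Icc_subset_Icc le_rfl hl2)
  have hg2 : IntegrableOn g (Set.Ioc l a) :=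
    hg.mono_set ((Set.Ioc_subset_Icc_self).trans (Set.Icc_subset_Icc hl1 le_rfl))
  -- a.e. equality on the left piece
  have hne : ∀ᵐ μ : ℝ, μ ≠ l := ae_ne_point l
  have hIleft : ∫ μ in Set.Icc (-a) l, (Real.sign (l - μ) / 2) * g μ
      = ∫ μ in Set.Icc (-a) l, (1 / 2) * g μ := by
    refine setIntegral_congr_ae measurableSet_Icc ?_
    filter_upwards [hne] with μ hμ hmem
    have : 0 < l - μ := sub_pos.mpr (lt_of_le_of_ne hmem.2 hμ)
    rw [Real.sign_of_pos this]
  have hIright : ∫ μ in Set.Ioc l a, (Real.sign (l - μ) / 2) * g μ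
      = ∫ μ in Set.Ioc l a, (-(1 / 2)) * g μ := by
    refine setIntegral_congr_fun measurableSet_Ioc fun μ hμ => ?_
    have : l - μ < 0 := sub_neg.mpr hμ.1
    rw [Real.sign_of_neg this]; ring
  have hint1 : IntegrableOn (fun μ => (Real.sign (l - μ) / 2) * g μ) (Set.Icc (-a) l) := by
    refine (hg1.const_mul (1 / 2)).congr ?_
    filter_upwards [ae_restrict_mem measurableSet_Icc, ae_restrict_of_ae hne] with μ hmem hμ
    have : 0 < l - μ := sub_pos.mpr (lt_of_le_of_ne hmem.2 hμ)
    rw [Real.sign_of_pos this]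
  have hint2 : IntegrableOn (fun μ => (Real.sign (l - μ) / 2) * g μ) (Set.Ioc l a) := by
    refine (hg2.const_mul (-(1 / 2))).congr ?_
    filter_upwards [ae_restrict_mem measurableSet_Ioc] with μ hmem
    have : l - μ < 0 := sub_neg.mpr hmem.1
    rw [Real.sign_of_neg this]; ring
  have hsplit : epsOp a g l
      = (∫ μ in Set.Icc (-a) l, (Real.sign (l - μ) / 2) * g μ)
        + ∫ μ in Set.Ioc l a, (Real.sign (l - μ) / 2) * g μ := by
    rw [epsOp, ← hdecomp]
    exact setIntegral_union hdisj measurableSet_Ioc hint1 hint2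
  have hIcc : ∫ μ in Set.Icc (-a) l, g μ = ∫ x in (-a)..l, g x := by
    rw [intervalIntegral.integral_of_le hl1, integral_Icc_eq_integral_Ioc]
  have hIoc : ∫ μ in Set.Ioc l a, g μ = ∫ x in l..a, g x := by
    rw [intervalIntegral.integral_of_le hl2]
  have hadj : (∫ x in (-a)..l, g x) + ∫ x in l..a, g x = ∫ x in (-a)..a, g x := by
    apply intervalIntegral.integral_add_adjacent_intervals
    · have h1 : Set.uIcc (-a) l = Set.Icc (-a) l := Set.uIcc_of_le hl1
      exact (h1 ▸ hg1).intervalIntegrable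
    · have h2 : Set.uIcc l a = Set.Icc l a := Set.uIcc_of_le hl2
      have h3 : IntegrableOn g (Set.Icc l a) := hg.mono_set (Set.Icc_subset_Icc hl1 le_rfl)
      exact (h2 ▸ h3).intervalIntegrable
  rw [hsplit, hIleft, hIright, MeasureTheory.integral_const_mul, MeasureTheory.integral_const_mul, hIcc, hIoc]
  have := hadj
  linarith

/-- Integration-by-parts identity
`ε(fψ) = f·εψ − (1/2)f(a)εψ(a) − (1/2)f(−a)εψ(−a) − ε(f'·εψ)` on `(−a,a)`. -/
theorem eps_mul_integration_by_parts (a : ℝ) (ha : 0 < a) (f ψ : ℝ → ℝ)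
    (hf : ContDiffOn ℝ 1 f (Set.Icc (-a) a))
    (hψ : ContinuousOn ψ (Set.Icc (-a) a)) :
    ∀ l ∈ Set.Ioo (-a) a,
      epsOp a (fun μ => f μ * ψ μ) l
        = f l * epsOp a ψ l
          - (1 / 2) * f a * epsOp a ψ a
          - (1 / 2) * f (-a) * epsOp a ψ (-a)
          - epsOp a (fun μ => deriv f μ * epsOp a ψ μ) l := by
  intro l hl
  have haa : -a ≤ a := by linarith
  have hlI : l ∈ Set.Icc (-a) a := Set.mem_Icc.mpr ⟨hl.1.le, hl.2.le⟩
  set I := Set.Icc (-a) a with hI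
  -- continuity of the within-derivative
  set F' : ℝ → ℝ := derivWithin f I with hF'def
  have hF'cont : ContinuousOn F' I :=
    hf.continuousOn_derivWithin (uniqueDiffOn_Icc (by linarith)) le_rfl
  -- on the interior, f has derivative F' x, and deriv f = F'
  have hderiv : ∀ x ∈ Set.Ioo (-a) a, HasDerivAt f (F' x) x := by
    intro x hx
    have hmem : I ∈ nhds x := Icc_mem_nhds hx.1 hx.2
    have hdx : DifferentiableAt ℝ f x :=
      ((hf.differentiableOn (by norm_num)) x ⟨hx.1.le, hx.2.le⟩).differentiableAt hmem
    have : F' x = deriv f x := derivWithin_of_mem_nhds hmem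
    rw [this]; exact hdx.hasDerivAt
  have hderiv_eq : ∀ x ∈ Set.Ioo (-a) a, deriv f x = F' x := fun x hx =>
    (derivWithin_of_mem_nhds (Icc_mem_nhds hx.1 hx.2)).symm
  -- primitive of ψ
  set E : ℝ → ℝ := fun t => ∫ x in (-a)..t, ψ x with hEdef
  set c : ℝ := (1 / 2) * ∫ x in (-a)..a, ψ x with hcdef
  have hψint : IntegrableOn ψ I := hψ.integrableOn_Icc
  have hψii : ∀ b ∈ I, IntervalIntegrable ψ volume (-a) b := fun b hb =>
    (hψint.mono_set (by rw [Set.uIcc_of_le hb.1]; exact Set.Icc_subset_Icc le_rfl hb.2)).intervalIntegrable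
  have hEcont : ContinuousOn E I := by
    have := intervalIntegral.continuousOn_primitive_interval
      (μ := volume) (f := ψ) (a := -a) (b := a) (by rwa [Set.uIcc_of_le haa])
    rwa [Set.uIcc_of_le haa] at this
  have hEps : ∀ t ∈ I, epsOp a ψ t = E t - c := fun t ht =>
    epsOp_eq_interval a ψ hψint ht
  have hEderiv : ∀ x ∈ Set.Ioo (-a) a, HasDerivAt E (ψ x) x := by
    intro x hx
    have hxI : x ∈ I := ⟨hx.1.le, hx.2.le⟩
    have hcont : ContinuousAt ψ x :=
      (hψ x hxI).continuousAt (Icc_mem_nhds hx.1 hx.2)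
    exact intervalIntegral.integral_hasDerivAt_right (hψii x hxI)
      ((hψ.mono Set.Ioo_subset_Icc_self).stronglyMeasurableAtFilter isOpen_Ioo x hx) hcont
  have hF'ii : ∀ b ∈ I, IntervalIntegrable F' volume (-a) b := fun b hb =>
    ((hF'cont.mono (Set.Icc_subset_Icc le_rfl hb.2)).intervalIntegrable_of_Icc hb.1)
  -- integration by parts on [-a, b] for b ∈ I
  have hIBP : ∀ b ∈ I, ∫ x in (-a)..b, f x * ψ x
      = f b * E b - f (-a) * E (-a) - ∫ x in (-a)..b, F' x * E x := by
    intro b hb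
    have hsub : Set.uIcc (-a) b ⊆ I := by
      rw [Set.uIcc_of_le hb.1]; exact Set.Icc_subset_Icc le_rfl hb.2
    refine intervalIntegral.integral_mul_deriv_eq_deriv_mul_of_hasDeriv_right
      (hf.continuousOn.mono hsub) (hEcont.mono hsub) ?_ ?_ (hF'ii b hb) (hψii b hb)
    · intro x hx
      rw [min_eq_left hb.1, max_eq_right hb.1] at hx
      exact (hderiv x ⟨hx.1, lt_of_lt_of_le hx.2 hb.2⟩).hasDerivWithinAt
    · intro x hx
      rw [min_eq_left hb.1, max_eq_right hb.1] at hx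
      exact (hEderiv x ⟨hx.1, lt_of_lt_of_le hx.2 hb.2⟩).hasDerivWithinAt
  -- FTC for f
  have hFTC : ∀ b ∈ I, ∫ x in (-a)..b, F' x = f b - f (-a) := by
    intro b hb
    have hsub : Set.uIcc (-a) b ⊆ I := by
      rw [Set.uIcc_of_le hb.1]; exact Set.Icc_subset_Icc le_rfl hb.2
    refine intervalIntegral.integral_eq_sub_of_hasDeriv_right
      (hf.continuousOn.mono hsub) ?_ (hF'ii b hb)
    intro x hx
    rw [min_eq_left hb.1, max_eq_right hb.1] at hx
    exact (hderiv x ⟨hx.1, lt_of_lt_of_le hx.2 hb.2⟩).hasDerivWithinAt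
  -- the integrand of the last eps term, cleaned up
  have hEpsCont : ContinuousOn (fun μ => epsOp a ψ μ) I := by
    exact ContinuousOn.congr (f := fun x => E x - c) (hEcont.sub continuousOn_const)
      (fun x hx => hEps x hx)
  have hgint : IntegrableOn (fun μ => deriv f μ * epsOp a ψ μ) I := by
    have hbase : IntegrableOn (fun μ => F' μ * epsOp a ψ μ) I :=
      (hF'cont.mul hEpsCont).integrableOn_Icc
    refine hbase.congr ?_
    have h1 : ∀ᵐ μ : ℝ, μ ≠ a := ae_ne_point a
    have h2 : ∀ᵐ μ : ℝ, μ ≠ -a := ae_ne_point (-a)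
    filter_upwards [ae_restrict_mem measurableSet_Icc, ae_restrict_of_ae h1,
      ae_restrict_of_ae h2] with μ hmem hμ1 hμ2
    have hμIoo : μ ∈ Set.Ioo (-a) a :=
      ⟨lt_of_le_of_ne hmem.1 (Ne.symm hμ2), lt_of_le_of_ne hmem.2 hμ1⟩
    rw [hderiv_eq μ hμIoo]
  have hgcongr : ∀ b ∈ I, ∫ x in (-a)..b, deriv f x * epsOp a ψ x
      = ∫ x in (-a)..b, F' x * (E x - c) := by
    intro b hb
    refine intervalIntegral.integral_congr_ae ?_
    have h1 : ∀ᵐ μ : ℝ, μ ≠ a := ae_ne_point a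
    filter_upwards [h1] with x hx hmem
    rw [Set.uIoc_of_le hb.1] at hmem
    have hxI : x ∈ I := ⟨hmem.1.le, hmem.2.trans hb.2⟩
    have hxIoo : x ∈ Set.Ioo (-a) a := ⟨hmem.1, lt_of_le_of_ne hxI.2 hx⟩
    rw [hderiv_eq x hxIoo, hEps x hxI]
  -- expand eps of the product f ψ
  have hfψint : IntegrableOn (fun μ => f μ * ψ μ) I :=
    (hf.continuousOn.mul hψ).integrableOn_Icc
  have haI : a ∈ I := Set.mem_Icc.mpr ⟨haa, le_rfl⟩
  have hnaI : (-a) ∈ I := Set.mem_Icc.mpr ⟨le_rfl, haa⟩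
  -- key values
  have hEna : E (-a) = 0 := intervalIntegral.integral_same
  have hEa : E a = 2 * c := by rw [hcdef]; ring
  -- expand the F'(E - c) integrals
  have hFc : ∀ b ∈ I, ∫ x in (-a)..b, F' x * (E x - c)
      = (∫ x in (-a)..b, F' x * E x) - (f b - f (-a)) * c := by
    intro b hb
    have hEii : IntervalIntegrable (fun x => F' x * E x) volume (-a) b := by
      have hsub : Set.Icc (-a) b ⊆ I := Set.Icc_subset_Icc le_rfl hb.2
      exact ((hF'cont.mono hsub).mul (hEcont.mono hsub)).intervalIntegrable_of_Icc hb.1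
    have hcii : IntervalIntegrable (fun x => F' x * c) volume (-a) b :=
      (hF'ii b hb).mul_const c
    have : ∫ x in (-a)..b, F' x * (E x - c)
        = (∫ x in (-a)..b, F' x * E x) - ∫ x in (-a)..b, F' x * c := by
      rw [← intervalIntegral.integral_sub hEii hcii]
      congr 1; ext x; ring
    rw [this, intervalIntegral.integral_mul_const, hFTC b hb]
  -- put everything together
  rw [epsOp_eq_interval a (fun μ => f μ * ψ μ) hfψint hlI,
    epsOp_eq_interval a (fun μ => deriv f μ * epsOp a ψ μ) hgint hlI,
    hgcongr l hlI, hgcongr a haI, hFc l hlI, hFc a haI,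
    hIBP l hlI, hIBP a haI, hEps l hlI, hEps a haI, hEps (-a) hnaI,
    hEna, hEa]
  ring
end

section
/- Let V : ℝ → ℝ be an odd continuous function. Then for all integers k, l and α ∈ {0,1}, (1/4π²) ∫_{−π}^{π} ∫_{−π}^{π} [V(2cos x) − V(2cos y)]/[2cos x − 2cos y] · cos((k−l)(x−y) + (α(1∓1)+1)y) dx dy = 0, where the integrand is interpreted as the divided difference (so it is continuous). -/
open Real intervalIntegral

/-!
Translating both variables by `π` replaces `2 cos` by `-2 cos`, which leaves the divided difference
of the odd function `V` unchanged (off the diagonal by the formula, on it by continuity, since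
`cos t ≠ cos y` holds on a dense set), while the cosine factor changes sign because its coefficient
of `y` is odd. The integrand is `2π`-periodic in each variable, so the translation preserves the
integral over the torus, which therefore equals its own negative.
-/

lemma dense_setOf_cos_ne (y : ℝ) : Dense {t : ℝ | cos t ≠ cos y} := by
  have hc : {t : ℝ | cos t = cos y}.Countable := by
    refine Set.Countable.mono (fun t ht => ?_) (Set.countable_iUnion fun k : ℤ =>
      (Set.countable_singleton (2 * k * π - y)).insert (2 * k * π + y))
    obtain ⟨k, hk⟩ := cos_eq_cos_iff.1 (Eq.symm ht)
    exact Set.mem_iUnion.2 ⟨k, hk⟩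
  exact hc.dense_compl ℝ

lemma sub_div_sub_map_mul_eq {V : ℝ → ℝ} {ε : ℝ} (hε : ε ≠ 0) (hV : ∀ s, V (ε * s) = ε * V s)
    (a b : ℝ) : (V (ε * a) - V (ε * b)) / (ε * a - ε * b) = (V a - V b) / (a - b) := by
  rw [hV, hV, ← mul_sub, ← mul_sub, mul_div_mul_left _ _ hε]

def IsDivDiffCos (V : ℝ → ℝ) (D : ℝ → ℝ → ℝ) : Prop :=
  ∀ x y, 2 * cos x ≠ 2 * cos y → D x y = (V (2 * cos x) - V (2 * cos y)) / (2 * cos x - 2 * cos y)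

namespace IsDivDiffCos

variable {V : ℝ → ℝ} {D : ℝ → ℝ → ℝ}

theorem apply_add_add (hDV : IsDivDiffCos V D) (hD : ∀ y, Continuous fun x => D x y)
    {ε c c' : ℝ} (hε : ε ≠ 0) (hV : ∀ s, V (ε * s) = ε * V s)
    (hc : ∀ t, cos (t + c) = ε * cos t) (hc' : ∀ t, cos (t + c') = ε * cos t) (x y : ℝ) :
    D (x + c) (y + c') = D x y := by
  refine congrFun (((hD _).comp (continuous_add_const c)).ext_on (dense_setOf_cos_ne y) (hD y)
    fun t (ht : cos t ≠ cos y) => ?_) x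
  have hne : 2 * cos t ≠ 2 * cos y := by simpa using ht
  have hne' : 2 * cos (t + c) ≠ 2 * cos (y + c') := by simpa [hc, hc', hε] using ht
  rw [Function.comp_apply, hDV _ _ hne', hDV _ _ hne, hc, hc', mul_left_comm 2 ε,
    mul_left_comm 2 ε, sub_div_sub_map_mul_eq hε hV]

theorem apply_add_two_pi_left (hDV : IsDivDiffCos V D) (hD : ∀ y, Continuous fun x => D x y)
    (x y : ℝ) : D (x + 2 * π) y = D x y := by
  simpa using hDV.apply_add_add hD one_ne_zero (by simp) (by simp) (c' := 0) (by simp) x y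

theorem apply_add_two_pi_right (hDV : IsDivDiffCos V D) (hD : ∀ y, Continuous fun x => D x y)
    (x y : ℝ) : D x (y + 2 * π) = D x y := by
  simpa using hDV.apply_add_add hD one_ne_zero (by simp) (c := 0) (by simp) (by simp) x y

theorem apply_add_pi_add_pi (hDV : IsDivDiffCos V D) (hD : ∀ y, Continuous fun x => D x y)
    (hodd : ∀ s, V (-s) = -V s) (x y : ℝ) : D (x + π) (y + π) = D x y :=
  hDV.apply_add_add hD (ε := -1) (by norm_num) (by simpa using hodd) (by simp) (by simp) x y

end IsDivDiffCos

theorem Function.Periodic.intervalIntegral_comp_add_right {E : Type*} [NormedAddCommGroup E]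
    [NormedSpace ℝ E] {g : ℝ → E} {T : ℝ} (hg : Periodic g T) (a c : ℝ) :
    ∫ x in a..a + T, g (x + c) = ∫ x in a..a + T, g x := by
  rw [integral_comp_add_right, add_right_comm, hg.intervalIntegral_add_eq (a + c) a]

theorem intervalIntegral_intervalIntegral_eq_zero_of_periodic_of_antiperiodic
    {f : ℝ → ℝ → ℝ} {T c : ℝ}
    (hx : ∀ x y, f (x + T) y = f x y) (hy : ∀ x y, f x (y + T) = f x y)
    (hc : ∀ x y, f (x + c) (y + c) = -f x y) (a b : ℝ) :
    ∫ x in a..a + T, ∫ y in b..b + T, f x y = 0 := by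
  set F := fun x => ∫ y in b..b + T, f x y
  have hF : Function.Periodic F T := fun x => by simp only [F, hx]
  have hFc : ∀ x, F (x + c) = -F x := fun x => by
    simp only [F, ← integral_neg, ← hc x]
    exact (Function.Periodic.intervalIntegral_comp_add_right (hy (x + c)) b c).symm
  have h : ∫ x in a..a + T, F x = -∫ x in a..a + T, F x :=
    calc ∫ x in a..a + T, F x = ∫ x in a..a + T, F (x + c) :=
          (hF.intervalIntegral_comp_add_right a c).symm
      _ = -∫ x in a..a + T, F x := by simp only [hFc, integral_neg]
  change ∫ x in a..a + T, F x = 0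
  linarith

section CosKernel

variable (j n : ℤ) (x y : ℝ)

theorem cos_int_mul_sub_add_int_mul_add_two_pi_left :
    cos (j * (x + 2 * π - y) + n * y) = cos (j * (x - y) + n * y) := by
  rw [← cos_add_int_mul_two_pi (j * (x - y) + n * y) j]
  ring_nf

theorem cos_int_mul_sub_add_int_mul_add_two_pi_right :
    cos (j * (x - (y + 2 * π)) + n * (y + 2 * π)) = cos (j * (x - y) + n * y) := by
  rw [← cos_add_int_mul_two_pi (j * (x - y) + n * y) (n - j)]
  push_cast
  ring_nf

theorem cos_int_mul_sub_add_int_mul_add_pi_add_pi {n : ℤ} (hn : Odd n) :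
    cos (j * (x + π - (y + π)) + n * (y + π)) = -cos (j * (x - y) + n * y) := by
  rw [← neg_one_mul, ← hn.neg_one_zpow, ← cos_add_int_mul_pi]
  ring_nf

end CosKernel

theorem odd_divided_difference_integral_vanishes_general
    (V : ℝ → ℝ) (hodd : ∀ s, V (-s) = -V s)
    (D : ℝ → ℝ → ℝ) (hD : Continuous fun p : ℝ × ℝ => D p.1 p.2)
    (hDval : ∀ x y : ℝ, 2 * Real.cos x ≠ 2 * Real.cos y →
      D x y = (V (2 * Real.cos x) - V (2 * Real.cos y)) / (2 * Real.cos x - 2 * Real.cos y))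
    (k l : ℤ) (α : ℕ) (hα : α = 0 ∨ α = 1) (σ : ℝ) (hσ : σ = 0 ∨ σ = 2) :
    (1 / (4 * Real.pi ^ 2)) *
      ∫ x in (-Real.pi)..Real.pi, ∫ y in (-Real.pi)..Real.pi,
        D x y * Real.cos (((k : ℝ) - l) * (x - y) + ((α : ℝ) * σ + 1) * y) = 0 := by
  obtain ⟨n, hn, hcoeff⟩ : ∃ n : ℤ, Odd n ∧ (α : ℝ) * σ + 1 = n := by
    rcases hα with rfl | rfl <;> rcases hσ with rfl | rfl
    exacts [⟨1, odd_one, by norm_num⟩, ⟨1, odd_one, by norm_num⟩, ⟨1, odd_one, by norm_num⟩,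
      ⟨3, by decide, by norm_num⟩]
  have hDV : IsDivDiffCos V D := hDval
  have hDx : ∀ y, Continuous fun x => D x y := fun y => hD.comp (.prodMk_left y)
  have hvanish := intervalIntegral_intervalIntegral_eq_zero_of_periodic_of_antiperiodic
    (f := fun x y => D x y * cos (((k - l : ℤ) : ℝ) * (x - y) + n * y))
    (fun x y => by rw [hDV.apply_add_two_pi_left hDx, cos_int_mul_sub_add_int_mul_add_two_pi_left])
    (fun x y => by
      rw [hDV.apply_add_two_pi_right hDx, cos_int_mul_sub_add_int_mul_add_two_pi_right])
    (fun x y => by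
      rw [hDV.apply_add_pi_add_pi hDx hodd, cos_int_mul_sub_add_int_mul_add_pi_add_pi _ _ _ hn,
        mul_neg])
    (-π) (-π)
  rw [show -π + 2 * π = π by ring] at hvanish
  push_cast at hvanish
  rw [hcoeff, hvanish, mul_zero]

/-- For an odd continuous `V`, the double integral of the divided difference of
`V(2cos·)` against `cos((k−l)(x−y) + (α(1∓1)+1)y)` vanishes. Here `D` is the
continuous extension of the divided difference. -/
theorem odd_divided_difference_integral_vanishes
    (V : ℝ → ℝ) (hV : Continuous V) (hodd : ∀ s, V (-s) = -V s)
    (D : ℝ → ℝ → ℝ) (hD : Continuous fun p : ℝ × ℝ => D p.1 p.2)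
    (hDval : ∀ x y : ℝ, 2 * Real.cos x ≠ 2 * Real.cos y →
      D x y = (V (2 * Real.cos x) - V (2 * Real.cos y)) / (2 * Real.cos x - 2 * Real.cos y))
    (k l : ℤ) (α : ℕ) (hα : α = 0 ∨ α = 1) (σ : ℝ) (hσ : σ = 0 ∨ σ = 2) :
    (1 / (4 * Real.pi ^ 2)) *
      ∫ x in (-Real.pi)..Real.pi, ∫ y in (-Real.pi)..Real.pi,
        D x y * Real.cos (((k : ℝ) - l) * (x - y) + ((α : ℝ) * σ + 1) * y) = 0 :=
  odd_divided_difference_integral_vanishes_general V hodd D hD hDval k l α hα σ hσ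
end

section
/- Let 𝒥 be a Jacobi matrix on ℓ²(ℤ) with off-diagonal entries 𝒥_{k,k+1} = 𝒥_{k+1,k} = a_k ∈ ℝ, diagonal entries b_k ∈ ℝ, with sup|a_k|, sup|b_k| ≤ A. Then there exist positive constants C₀, C₁, C₂ depending only on A such that for all t ≥ 0 and all k, j: |(e^{it𝒥})_{k,j}| ≤ C₀ e^{−C₁|k−j| + C₂ t}. -/
/-!
If every row of `T` has at most three entries, each of size at most `A`, then weighting by
`exp (-|k - j|)` costs only a factor `exp 1` per application of `T`, because neighbouring
indices change `|k - j|` by at most one. Hence `‖(T ^ n e_j) k‖ ≤ (3eA)^n e^{-|k-j|}`, and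
summing the exponential series of `itT` term by term gives `e^{-|k-j|} e^{3eAt}`.
-/

open Complex

theorem norm_map_exp_le {𝕂 𝔸 F : Type*} [RCLike 𝕂] [NormedRing 𝔸] [NormedAlgebra 𝕂 𝔸]
    [CompleteSpace 𝔸] [NormedAddCommGroup F] [NormedSpace 𝕂 F] (φ : 𝔸 →L[𝕂] F) (x : 𝔸)
    {w r : ℝ} (h : ∀ n : ℕ, ‖φ (x ^ n)‖ ≤ w * r ^ n) :
    ‖φ (NormedSpace.exp x)‖ ≤ w * Real.exp r := by
  have hφ := (NormedSpace.exp_series_hasSum_exp' (𝕂 := 𝕂) x).mapL φ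
  have hexp : HasSum (fun n : ℕ => w * (r ^ n / n.factorial)) (w * Real.exp r) :=
    (Real.exp_eq_exp_ℝ ▸ NormedSpace.expSeries_div_hasSum_exp r).mul_left w
  refine hφ.norm_le_of_bounded hexp fun n => ?_
  rw [map_smul, norm_smul, norm_inv, RCLike.norm_natCast]
  calc (n.factorial : ℝ)⁻¹ * ‖φ (x ^ n)‖ ≤ (n.factorial : ℝ)⁻¹ * (w * r ^ n) := by
        gcongr; exact h n
    _ = w * (r ^ n / n.factorial) := by ring

lemma exp_neg_abs_sub_le_of_abs_sub_le_one {x y z : ℝ} (hxy : |x - y| ≤ 1) :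
    Real.exp (-|x - z|) ≤ Real.exp 1 * Real.exp (-|y - z|) := by
  rw [← Real.exp_add, Real.exp_le_exp]
  have := abs_sub_abs_le_abs_sub (y - z) (x - z)
  rw [show y - z - (x - z) = -(x - y) by ring, abs_neg] at this
  linarith

theorem norm_pow_apply_single_le {T : lp (fun _ : ℤ => ℂ) 2 →L[ℂ] lp (fun _ : ℤ => ℂ) 2} {c : ℝ}
    (hT : ∀ (u : lp (fun _ : ℤ => ℂ) 2) (k : ℤ),
      ‖(T u : ℤ → ℂ) k‖ ≤ c * (‖u (k + 1)‖ + ‖u k‖ + ‖u (k - 1)‖))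
    (hc : 0 ≤ c) (j : ℤ) (n : ℕ) (k : ℤ) :
    ‖((T ^ n) (lp.single 2 j 1) : ℤ → ℂ) k‖
      ≤ (3 * Real.exp 1 * c) ^ n * Real.exp (-|(k : ℝ) - j|) := by
  induction n generalizing k with
  | zero =>
    rcases eq_or_ne k j with rfl | hkj
    · simp
    · simp [hkj, (Real.exp_pos _).le]
  | succ n ih =>
    set v := (T ^ n) (lp.single 2 j 1)
    have hneighbour : ∀ k' : ℤ, |(k' : ℝ) - k| ≤ 1 →
        ‖v k'‖ ≤ (3 * Real.exp 1 * c) ^ n * (Real.exp 1 * Real.exp (-|(k : ℝ) - j|)) :=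
      fun k' hk' => (ih k').trans (by gcongr; exact exp_neg_abs_sub_le_of_abs_sub_le_one hk')
    have h₁ := hneighbour (k + 1) (by push_cast; simp)
    have h₀ := hneighbour k (by simp)
    have h₂ := hneighbour (k - 1) (by push_cast; simp)
    calc ‖((T ^ (n + 1)) (lp.single 2 j 1) : ℤ → ℂ) k‖ = ‖(T v : ℤ → ℂ) k‖ := by
          rw [pow_succ']; rfl
      _ ≤ c * (‖v (k + 1)‖ + ‖v k‖ + ‖v (k - 1)‖) := hT v k
      _ ≤ c * (3 * ((3 * Real.exp 1 * c) ^ n * (Real.exp 1 * Real.exp (-|(k : ℝ) - j|)))) := by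
          gcongr; linarith
      _ = (3 * Real.exp 1 * c) ^ (n + 1) * Real.exp (-|(k : ℝ) - j|) := by ring

theorem norm_jacobi_apply_le {A : ℝ} {a b : ℤ → ℝ} (ha : ∀ k, |a k| ≤ A) (hb : ∀ k, |b k| ≤ A)
    {T : lp (fun _ : ℤ => ℂ) 2 →L[ℂ] lp (fun _ : ℤ => ℂ) 2}
    (hT : ∀ (u : lp (fun _ : ℤ => ℂ) 2) (k : ℤ),
      (T u : ℤ → ℂ) k = a k * u (k + 1) + b k * u k + a (k - 1) * u (k - 1))
    (u : lp (fun _ : ℤ => ℂ) 2) (k : ℤ) :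
    ‖(T u : ℤ → ℂ) k‖ ≤ A * (‖u (k + 1)‖ + ‖u k‖ + ‖u (k - 1)‖) := by
  calc ‖(T u : ℤ → ℂ) k‖ ≤ |a k| * ‖u (k + 1)‖ + |b k| * ‖u k‖ + |a (k - 1)| * ‖u (k - 1)‖ := by
        rw [hT]
        exact norm_add₃_le.trans_eq (by simp only [norm_mul, Complex.norm_real, Real.norm_eq_abs])
    _ ≤ A * ‖u (k + 1)‖ + A * ‖u k‖ + A * ‖u (k - 1)‖ := by gcongr <;> apply_assumption
    _ = A * (‖u (k + 1)‖ + ‖u k‖ + ‖u (k - 1)‖) := by ring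

/-- Exponential off-diagonal decay of `e^{it𝒥}` for a bounded Jacobi matrix `𝒥` on
`ℓ²(ℤ)` with entries bounded by `A`:
`|(e^{it𝒥})_{k,j}| ≤ C₀ e^{−C₁|k−j| + C₂ t}` with constants depending only on `A`. -/
theorem exp_jacobi_matrix_decay (A : ℝ) (hA : 0 < A) :
    ∃ C₀ C₁ C₂ : ℝ, 0 < C₀ ∧ 0 < C₁ ∧ 0 < C₂ ∧
      ∀ (a b : ℤ → ℝ), (∀ k, |a k| ≤ A) → (∀ k, |b k| ≤ A) →
      ∀ T : lp (fun _ : ℤ => ℂ) 2 →L[ℂ] lp (fun _ : ℤ => ℂ) 2,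
        (∀ (u : lp (fun _ : ℤ => ℂ) 2) (k : ℤ),
          (T u : ℤ → ℂ) k = a k * u (k + 1) + b k * u k + a (k - 1) * u (k - 1)) →
      ∀ t : ℝ, 0 ≤ t → ∀ k j : ℤ,
        ‖((NormedSpace.exp ((I * t) • T)) (lp.single 2 j 1) : ℤ → ℂ) k‖
          ≤ C₀ * Real.exp (-C₁ * |(k : ℝ) - j| + C₂ * t) := by
  refine ⟨1, 1, 3 * Real.exp 1 * A, one_pos, one_pos, by positivity, ?_⟩
  intro a b ha hb T hT t ht k j
  let φ := (lp.evalCLM ℂ (fun _ : ℤ => ℂ) 2 k).comp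
    (ContinuousLinearMap.apply ℂ _ (lp.single 2 j 1 : lp (fun _ : ℤ => ℂ) 2))
  have hpow (n : ℕ) : ‖φ (((I * t) • T) ^ n)‖
      ≤ Real.exp (-|(k : ℝ) - j|) * (3 * Real.exp 1 * A * t) ^ n := by
    have hTn := norm_pow_apply_single_le (norm_jacobi_apply_le ha hb hT) hA.le j n k
    calc ‖φ (((I * t) • T) ^ n)‖ = t ^ n * ‖((T ^ n) (lp.single 2 j 1) : ℤ → ℂ) k‖ := by
          simp [φ, lp.evalCLM, smul_pow, abs_of_nonneg ht]
      _ ≤ t ^ n * ((3 * Real.exp 1 * A) ^ n * Real.exp (-|(k : ℝ) - j|)) := by gcongr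
      _ = Real.exp (-|(k : ℝ) - j|) * (3 * Real.exp 1 * A * t) ^ n := by ring
  calc _ = ‖φ (NormedSpace.exp ((I * t) • T))‖ := rfl
    _ ≤ Real.exp (-|(k : ℝ) - j|) * Real.exp (3 * Real.exp 1 * A * t) := norm_map_exp_le φ _ hpow
    _ = _ := by rw [← Real.exp_add, one_mul]; ring_nf
end

section
/- (Combes–Thomas bound.) Let 𝒥 be a bounded self-adjoint Jacobi matrix on ℓ²(ℤ) with |𝒥_{k,k+1}| ≤ A. Then for z ∈ ℂ with Im z ≠ 0 and |Im z| sufficiently small (depending on A), the resolvent R(z) = (𝒥 − z)^{−1} satisfies |R_{k,j}(z)| ≤ (2/|Im z|) e^{−C|Im z||k−j|} for a constant C > 0 depending only on A. -/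
open Complex
open scoped ENNReal InnerProductSpace lp ComplexConjugate

/-!
Weight the resolvent vector `ψ = R e_j` by `w n = exp (η · min (|n - j|, |k - j|))`; the
truncation keeps `w` bounded, so `U = w ψ` is again in `ℓ²`. Because `T` is tridiagonal, weighting
perturbs it only by a commutator whose entries are `O(A η)`, so `(T - z) U = e_j + B` with
`|⟪U, B⟫| ≤ 4 A η ‖U‖²`. Self-adjointness gives `|Im ⟪U, (T - z) U⟫| = |Im z| ‖U‖²`, and with
`η = |Im z| / (8 A)` this forces `‖U‖ ≤ 2 / |Im z|`. The `k`-th coordinate of `U` is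
`e^{η |k - j|} ψ k`, which is the claimed decay.
-/

section SelfAdjoint

variable {E : Type*} [NormedAddCommGroup E] [InnerProductSpace ℂ E] [CompleteSpace E]

theorem IsSelfAdjoint.im_inner_sub_smul_self {T : E →L[ℂ] E} (hT : IsSelfAdjoint T) (z : ℂ)
    (u : E) : (⟪u, T u - z • u⟫_ℂ).im = -(z.im * ‖u‖ ^ 2) := by
  have hreal : (⟪u, T u⟫_ℂ).im = 0 := hT.isSymmetric.im_inner_self_apply u
  rw [inner_sub_right, inner_smul_right, inner_self_eq_norm_sq_to_K, sub_im, mul_im, hreal]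
  simp [sq]

theorem IsSelfAdjoint.norm_le_of_sub_smul_eq_add {T : E →L[ℂ] E} (hT : IsSelfAdjoint T) {z : ℂ}
    (hz : z.im ≠ 0) {u e b : E} (he : ‖e‖ ≤ 1) (hu : T u - z • u = e + b)
    (hb : ‖⟪u, b⟫_ℂ‖ ≤ |z.im| / 2 * ‖u‖ ^ 2) : ‖u‖ ≤ 2 / |z.im| := by
  have him : 0 < |z.im| := abs_pos.mpr hz
  have key : |z.im| * ‖u‖ ^ 2 ≤ ‖u‖ + |z.im| / 2 * ‖u‖ ^ 2 :=
    calc |z.im| * ‖u‖ ^ 2 = |(⟪u, T u - z • u⟫_ℂ).im| := by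
          rw [hT.im_inner_sub_smul_self, abs_neg, abs_mul, abs_of_nonneg (sq_nonneg ‖u‖)]
      _ ≤ ‖⟪u, e⟫_ℂ‖ + ‖⟪u, b⟫_ℂ‖ := by
          rw [hu, inner_add_right]
          exact (abs_im_le_norm _).trans (norm_add_le _ _)
      _ ≤ ‖u‖ * ‖e‖ + |z.im| / 2 * ‖u‖ ^ 2 := by gcongr; exact norm_inner_le_norm _ _
      _ ≤ ‖u‖ + |z.im| / 2 * ‖u‖ ^ 2 := by gcongr; exact mul_le_of_le_one_right (norm_nonneg _) he
  rw [le_div_iff₀ him]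
  nlinarith [norm_nonneg u]

end SelfAdjoint

theorem Memℓp.ofReal_mul {α : Type*} {p : ℝ≥0∞} {f : α → ℂ} (hf : Memℓp f p) {w : α → ℝ}
    {M : ℝ} (hw : ∀ i, |w i| ≤ M) : Memℓp (fun i => (w i : ℂ) * f i) p :=
  (hf.norm.const_mul M).mono fun i => by
    rw [norm_mul, norm_real, Real.norm_eq_abs]
    exact mul_le_mul_of_nonneg_right (hw i) (norm_nonneg _)

theorem Real.abs_exp_sub_exp_le {s t : ℝ} (h : |t - s| ≤ 1) :
    |exp t - exp s| ≤ 2 * |t - s| * exp s := by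
  have : exp t - exp s = exp s * (exp (t - s) - 1) := by rw [mul_sub, ← exp_add]; ring_nf
  rw [this, abs_mul, abs_of_pos (exp_pos s), mul_comm]
  exact mul_le_mul_of_nonneg_right (abs_exp_sub_one_le h) (exp_pos s).le

namespace CombesThomas

noncomputable def entry (T : ℓ^2(ℤ, ℂ) →L[ℂ] ℓ^2(ℤ, ℂ)) (k j : ℤ) : ℂ := T (lp.single 2 j 1) k

theorem hasSum_mul_entry (T : ℓ^2(ℤ, ℂ) →L[ℂ] ℓ^2(ℤ, ℂ)) (f : ℓ^2(ℤ, ℂ)) (n : ℤ) :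
    HasSum (fun m => f m * entry T n m) (T f n) := by
  have := ((lp.hasSum_single ENNReal.ofNat_ne_top f).mapL T).mapL
    (lp.evalCLM ℂ (fun _ : ℤ => ℂ) 2 n)
  have hterm : ∀ m,
      lp.evalCLM ℂ (fun _ : ℤ => ℂ) 2 n (T (lp.single 2 m (f m))) = f m * entry T n m := by
    intro m
    have hs : lp.single 2 m (f m) = f m • (lp.single 2 m (1 : ℂ) : ℓ^2(ℤ, ℂ)) := by
      rw [← lp.single_smul, smul_eq_mul, mul_one]
    rw [hs, map_smul, map_smul, smul_eq_mul]
    rfl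
  simp only [hterm] at this
  exact this

theorem apply_eq_of_tridiagonal {T : ℓ^2(ℤ, ℂ) →L[ℂ] ℓ^2(ℤ, ℂ)}
    (hT : ∀ k j : ℤ, 1 < |k - j| → entry T k j = 0) (f : ℓ^2(ℤ, ℂ)) (n : ℤ) :
    T f n = f (n - 1) * entry T n (n - 1) + f n * entry T n n + f (n + 1) * entry T n (n + 1) := by
  have hsum : HasSum (fun m => f m * entry T n m)
      (∑ m ∈ {n - 1, n, n + 1}, f m * entry T n m) := by
    refine hasSum_sum_of_ne_finset_zero fun m hm => ?_
    simp only [Finset.mem_insert, Finset.mem_singleton, not_or] at hm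
    rw [hT n m (by rw [lt_abs]; omega), mul_zero]
  rw [(hasSum_mul_entry T f n).unique hsum,
    Finset.sum_insert (by simp only [Finset.mem_insert, Finset.mem_singleton]; omega),
    Finset.sum_pair (by omega), add_assoc]

theorem _root_.IsSelfAdjoint.entry_eq_conj {T : ℓ^2(ℤ, ℂ) →L[ℂ] ℓ^2(ℤ, ℂ)} (hT : IsSelfAdjoint T)
    (k j : ℤ) : entry T k j = conj (entry T j k) := by
  have := hT.isSymmetric (lp.single 2 k 1) (lp.single 2 j 1)
  simp only [ContinuousLinearMap.coe_coe, lp.inner_single_left, lp.inner_single_right] at this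
  simpa [entry] using this.symm

theorem norm_apply_sub_weight_mul_apply_le {T : ℓ^2(ℤ, ℂ) →L[ℂ] ℓ^2(ℤ, ℂ)}
    (hT : ∀ k j : ℤ, 1 < |k - j| → entry T k j = 0) {A δ : ℝ}
    (hlow : ∀ n, ‖entry T n (n - 1)‖ ≤ A) (hup : ∀ n, ‖entry T n (n + 1)‖ ≤ A)
    {w : ℤ → ℝ} (hw : ∀ m n : ℤ, |m - n| = 1 → |w m - w n| ≤ δ * |w m|)
    {f g : ℓ^2(ℤ, ℂ)} (hg : ∀ n, g n = w n * f n) (n : ℤ) :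
    ‖T g n - w n * T f n‖ ≤ A * δ * (‖g (n - 1)‖ + ‖g (n + 1)‖) := by
  have hA : 0 ≤ A := (norm_nonneg _).trans (hlow 0)
  have hterm : ∀ m, |m - n| = 1 → ‖entry T n m‖ ≤ A →
      ‖entry T n m * (w m - w n) * f m‖ ≤ A * δ * ‖g m‖ := by
    intro m hm hAm
    rw [hg, norm_mul, norm_mul, norm_mul, ← ofReal_sub, norm_real, norm_real, Real.norm_eq_abs,
      Real.norm_eq_abs]
    calc ‖entry T n m‖ * |w m - w n| * ‖f m‖ ≤ A * (δ * |w m|) * ‖f m‖ := by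
          gcongr; exact hw m n hm
      _ = A * δ * (|w m| * ‖f m‖) := by ring
  have hdiff : T g n - w n * T f n = entry T n (n - 1) * (w (n - 1) - w n) * f (n - 1)
      + entry T n (n + 1) * (w (n + 1) - w n) * f (n + 1) := by
    rw [apply_eq_of_tridiagonal hT g, apply_eq_of_tridiagonal hT f, hg, hg, hg]
    push_cast
    ring
  rw [hdiff, mul_add]
  exact (norm_add_le _ _).trans
    (add_le_add (hterm _ (by simp) (hlow n)) (hterm _ (by simp) (hup n)))

theorem norm_inner_le_of_norm_apply_le_neighbors {u b : ℓ^2(ℤ, ℂ)} {c : ℝ} (hc : 0 ≤ c)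
    (hb : ∀ n, ‖b n‖ ≤ c * (‖u (n - 1)‖ + ‖u (n + 1)‖)) : ‖⟪u, b⟫_ℂ‖ ≤ 2 * c * ‖u‖ ^ 2 := by
  have hsq : HasSum (fun n => ‖u n‖ ^ 2) (‖u‖ ^ 2) := by
    simpa using lp.hasSum_norm (p := 2) (by norm_num) u
  have hprev := (Equiv.subRight (1 : ℤ)).hasSum_iff.mpr hsq
  have hnext := (Equiv.addRight (1 : ℤ)).hasSum_iff.mpr hsq
  rw [lp.inner_eq_tsum]
  refine (tsum_of_norm_bounded ((hsq.add ((hprev.add hnext).div_const 2)).mul_left c)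
    fun n => ?_).trans_eq (by ring)
  calc ‖⟪u n, b n⟫_ℂ‖ ≤ ‖u n‖ * (c * (‖u (n - 1)‖ + ‖u (n + 1)‖)) :=
        (norm_inner_le_norm _ _).trans (by gcongr; exact hb n)
    _ ≤ c * (‖u n‖ ^ 2 + (‖u (n - 1)‖ ^ 2 + ‖u (n + 1)‖ ^ 2) / 2) := by
        nlinarith [mul_nonneg hc (sq_nonneg (‖u n‖ - ‖u (n - 1)‖)),
          mul_nonneg hc (sq_nonneg (‖u n‖ - ‖u (n + 1)‖))]

noncomputable def cutoffWeight (η : ℝ) (j k n : ℤ) : ℝ :=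
  Real.exp (η * (min |n - j| |k - j| : ℤ))

theorem cutoffWeight_pos (η : ℝ) (j k n : ℤ) : 0 < cutoffWeight η j k n :=
  Real.exp_pos _

theorem cutoffWeight_left (η : ℝ) (j k : ℤ) : cutoffWeight η j k j = 1 := by
  simp [cutoffWeight]

theorem cutoffWeight_right (η : ℝ) (j k : ℤ) :
    cutoffWeight η j k k = Real.exp (η * |(k : ℝ) - j|) := by
  simp [cutoffWeight]

theorem abs_cutoffWeight_le {η : ℝ} (hη : 0 ≤ η) (j k n : ℤ) :
    |cutoffWeight η j k n| ≤ Real.exp (η * |(k : ℝ) - j|) := by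
  rw [abs_of_pos (cutoffWeight_pos η j k n), cutoffWeight, Real.exp_le_exp]
  gcongr
  exact_mod_cast min_le_right _ _

theorem abs_cutoffWeight_sub_le {η : ℝ} (hη₀ : 0 ≤ η) (hη₁ : η ≤ 1) {j k m n : ℤ}
    (hmn : |m - n| = 1) :
    |cutoffWeight η j k m - cutoffWeight η j k n| ≤ 2 * η * |cutoffWeight η j k m| := by
  have hlip : |((min |n - j| |k - j| : ℤ) : ℝ) - (min |m - j| |k - j| : ℤ)| ≤ 1 := by
    norm_cast
    simp only [abs_eq_max_neg] at hmn ⊢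
    omega
  have hexp : |η * (min |n - j| |k - j| : ℤ) - η * (min |m - j| |k - j| : ℤ)| ≤ η := by
    rw [← mul_sub, abs_mul, abs_of_nonneg hη₀]
    exact mul_le_of_le_one_right hη₀ hlip
  rw [abs_sub_comm, abs_of_pos (cutoffWeight_pos η j k m)]
  calc _ ≤ 2 * |η * (min |n - j| |k - j| : ℤ) - η * (min |m - j| |k - j| : ℤ)|
        * cutoffWeight η j k m := Real.abs_exp_sub_exp_le (hexp.trans hη₁)
    _ ≤ 2 * η * cutoffWeight η j k m := by gcongr; exact (cutoffWeight_pos η j k m).le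

theorem norm_weighted_le_of_sub_smul_eq_single {T : ℓ^2(ℤ, ℂ) →L[ℂ] ℓ^2(ℤ, ℂ)} (hsa : IsSelfAdjoint T)
    (htri : ∀ k j : ℤ, 1 < |k - j| → entry T k j = 0) {A : ℝ}
    (hA : ∀ n, ‖entry T (n + 1) n‖ ≤ A) {z : ℂ} (hz : z.im ≠ 0) {j : ℤ} {ψ : ℓ^2(ℤ, ℂ)}
    (hψ : T ψ - z • ψ = lp.single 2 j 1) {w : ℤ → ℝ} {δ : ℝ} (hδ : 0 ≤ δ)
    (hδz : 4 * A * δ ≤ |z.im|) (hwj : w j = 1)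
    (hw : ∀ m n : ℤ, |m - n| = 1 → |w m - w n| ≤ δ * |w m|)
    {U : ℓ^2(ℤ, ℂ)} (hU : ∀ n, U n = w n * ψ n) : ‖U‖ ≤ 2 / |z.im| := by
  have hlow : ∀ n, ‖entry T n (n - 1)‖ ≤ A := fun n => by simpa using hA (n - 1)
  have hup : ∀ n, ‖entry T n (n + 1)‖ ≤ A := fun n => by
    rw [hsa.entry_eq_conj, RCLike.norm_conj]; exact hA n
  have hA0 : 0 ≤ A := (norm_nonneg _).trans (hA 0)
  set b := T U - z • U - lp.single 2 j 1 with hb_def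
  -- `w j = 1`, so weighting fixes `e_j` and `b` is the commutator `[T, w] ψ`
  have hb : ∀ n, b n = T U n - w n * T ψ n := by
    intro n
    have hψn := congr($hψ n)
    have hsingle : (lp.single 2 j 1 : ℓ^2(ℤ, ℂ)) n = w n * (lp.single 2 j 1 : ℓ^2(ℤ, ℂ)) n := by
      by_cases hn : n = j
      · subst hn; simp [hwj]
      · rw [lp.single_apply_ne 2 j _ hn, mul_zero]
    simp only [hb_def, lp.coeFn_sub, lp.coeFn_smul, Pi.sub_apply, Pi.smul_apply, smul_eq_mul]
      at hψn ⊢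
    rw [hsingle, ← hψn, hU]
    ring
  refine hsa.norm_le_of_sub_smul_eq_add hz (e := lp.single 2 j 1) (b := b)
    (by rw [lp.norm_single (by norm_num)]; simp) (by rw [hb_def]; abel) ?_
  calc ‖⟪U, b⟫_ℂ‖ ≤ 2 * (A * δ) * ‖U‖ ^ 2 :=
        norm_inner_le_of_norm_apply_le_neighbors (by positivity) fun n => by
          rw [hb n]; exact norm_apply_sub_weight_mul_apply_le htri hlow hup hw hU n
    _ ≤ |z.im| / 2 * ‖U‖ ^ 2 := by gcongr; linarith

end CombesThomas

open CombesThomas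

/-- Combes–Thomas bound for bounded self-adjoint Jacobi matrices on `ℓ²(ℤ)`:
if the off-diagonal entries are bounded by `A`, then for `z` with small nonzero
imaginary part any (two-sided) resolvent `R = (𝒥 − z)⁻¹` satisfies
`|R_{k,j}(z)| ≤ (2/|Im z|) e^{−C|Im z||k−j|}`. -/
theorem combes_thomas_bound (A : ℝ) (hA : 0 < A) :
    ∃ ε C : ℝ, 0 < ε ∧ 0 < C ∧
      ∀ T : lp (fun _ : ℤ => ℂ) 2 →L[ℂ] lp (fun _ : ℤ => ℂ) 2,
        IsSelfAdjoint T →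
        (∀ k j : ℤ, 1 < |k - j| → ((T (lp.single 2 j 1)) : ℤ → ℂ) k = 0) →
        (∀ k : ℤ, ‖((T (lp.single 2 k 1)) : ℤ → ℂ) (k + 1)‖ ≤ A) →
      ∀ z : ℂ, z.im ≠ 0 → |z.im| < ε →
      ∀ R : lp (fun _ : ℤ => ℂ) 2 →L[ℂ] lp (fun _ : ℤ => ℂ) 2,
        (T - z • 1) ∘L R = 1 → R ∘L (T - z • 1) = 1 →
      ∀ k j : ℤ,
        ‖((R (lp.single 2 j 1)) : ℤ → ℂ) k‖
          ≤ (2 / |z.im|) * Real.exp (-C * |z.im| * |(k : ℝ) - j|) := by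
  refine ⟨8 * A, 1 / (8 * A), by positivity, by positivity, ?_⟩
  intro T hT htri hA' z hz hzε R hRT _ k j
  set η := |z.im| / (8 * A) with hη
  have hη₀ : 0 ≤ η := by positivity
  have hη₁ : η ≤ 1 := by rw [hη, div_le_one (by positivity)]; exact hzε.le
  set ψ := R (lp.single 2 j 1)
  have hψ : T ψ - z • ψ = lp.single 2 j 1 := by simpa using congr($hRT (lp.single 2 j 1))
  let U : ℓ^2(ℤ, ℂ) := ⟨_, (lp.memℓp ψ).ofReal_mul (abs_cutoffWeight_le hη₀ j k)⟩
  have hU : ‖U‖ ≤ 2 / |z.im| :=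
    norm_weighted_le_of_sub_smul_eq_single hT htri hA' hz hψ (by positivity)
      (by rw [hη]; field_simp; norm_num) (cutoffWeight_left η j k)
      (fun _ _ hmn => abs_cutoffWeight_sub_le hη₀ hη₁ hmn) fun _ => rfl
  calc ‖ψ k‖ = ‖U k‖ * Real.exp (-(η * |(k : ℝ) - j|)) := by
        rw [show U k = _ * ψ k from rfl, norm_mul, norm_real, Real.norm_eq_abs,
          abs_of_pos (cutoffWeight_pos η j k k), cutoffWeight_right, mul_comm _ ‖ψ k‖, mul_assoc,
          ← Real.exp_add, add_neg_cancel, Real.exp_zero, mul_one]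
    _ ≤ 2 / |z.im| * Real.exp (-(η * |(k : ℝ) - j|)) := by
        gcongr; exact (lp.norm_apply_le_norm two_ne_zero U k).trans hU
    _ = _ := by rw [hη]; ring_nf
end
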